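/- arXiv:2401.16539 — 3 statements merged into one kernel-verified Lean document; each statement's English description precedes it below -/
import Mathlib

section
/- Let H be a complex Hilbert space, 𝒱 and 𝒲 closed subspaces with H = 𝒱 ⊕ 𝒲ᗮ, P = π_{𝒱,𝒲ᗮ}, and ε ≥ 0. Let (W,w) be a fusion frame for 𝒲 with synthesis operator T_W, and let L : K_W → H be a bounded operator with ‖L T_W* − P‖ ≤ ε and range of L equal to 𝒱. For each i ∈ I assume V_i := L(M_i(K_W)) is a closed subspace, let v = (v_i)_{i∈I} be weights, assume (V,v) is a fusion Bessel sequence with synthesis operator T_V, and assume Q_{L,v} : K_W → K_V, (Q_{L,v} f)_i = v_i⁻¹ L(M_i f), is a well-defined bounded operator. Then T_V ∘ Q_{L,v} = L, Q_{L,v} is component preserving, the range of T_V equals 𝒱 (so (V,v) is a fusion frame for 𝒱), and ‖T_V Q_{L,v} T_W* − P‖ ≤ ε. -/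
/-!
Every `f ∈ K_W` is the sum of its components `M_i f`, so
`T_V (Q_{L,v} f) = ∑ v_i (v_i⁻¹ L (M_i f)) = L f`. Hence `T_V Q_{L,v} T_W* = L T_W*`, which
gives the approximation bound, and `range T_V ⊇ range L = 𝒱`; conversely `range T_V ⊆ 𝒱`
because every `V_i ⊆ range L = 𝒱` and `𝒱` is closed. Finally `Q_{L,v}` intertwines the
coordinate projections of `K_W` and `K_V`, and each `V_i` is reached in the `i`-th coordinate,
so `Q_{L,v}` is component preserving.
-/

open scoped ENNReal

section CoordinateProjection

variable {𝕜 : Type*} [NormedField 𝕜] {I : Type*} [DecidableEq I] {E : I → Type*}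
  [∀ i, NormedAddCommGroup (E i)] [∀ i, NormedSpace 𝕜 (E i)] {p : ℝ≥0∞} [Fact (1 ≤ p)]

def IsCoordinateProjection (M : I → lp E p →L[𝕜] lp E p) : Prop :=
  ∀ k g j, M k g j = if j = k then g j else 0

namespace IsCoordinateProjection

variable {M : I → lp E p →L[𝕜] lp E p}

theorem apply_eq_single (hM : IsCoordinateProjection M) (k : I) (g : lp E p) :
    M k g = lp.single p k (g k) := by
  ext j
  rw [hM, lp.single_apply]
  split_ifs with h
  · subst h; simp
  · simp [h]

theorem apply_congr (hM : IsCoordinateProjection M) {k : I} {g g' : lp E p} (h : g k = g' k) :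
    M k g = M k g' := by
  rw [hM.apply_eq_single, hM.apply_eq_single, h]

theorem apply_apply (hM : IsCoordinateProjection M) (i j : I) (g : lp E p) :
    M j (M i g) = if j = i then M i g else 0 := by
  ext k
  by_cases hji : j = i
  · subst hji
    rw [if_pos rfl, hM, hM]
    split_ifs <;> rfl
  · rw [if_neg hji, hM, hM]
    split_ifs <;> simp_all

theorem hasSum (hM : IsCoordinateProjection M) (hp : p ≠ ∞) (g : lp E p) :
    HasSum (fun i => M i g) g := by
  simpa only [hM.apply_eq_single] using lp.hasSum_single hp g

end IsCoordinateProjection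

end CoordinateProjection

section Synthesis

variable {𝕜 : Type*} [NormedField 𝕜] {I : Type*} {E : I → Type*}
  [∀ i, NormedAddCommGroup (E i)] [∀ i, NormedSpace 𝕜 (E i)] {p : ℝ≥0∞} [Fact (1 ≤ p)]
  {H : Type*} [NormedAddCommGroup H] [NormedSpace 𝕜 H] {V : I → Submodule 𝕜 H}
  {q : ℝ≥0∞} [Fact (1 ≤ q)]

theorem range_le_of_hasSum_smul {T : lp (fun i => V i) q →L[𝕜] H} {c : I → 𝕜}
    (hT : ∀ g : lp (fun i => V i) q, HasSum (fun i => c i • (g i : H)) (T g))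
    {𝒱 : Submodule 𝕜 H} (h𝒱 : IsClosed (𝒱 : Set H)) (hV : ∀ i, V i ≤ 𝒱) :
    LinearMap.range (T : lp (fun i => V i) q →ₗ[𝕜] H) ≤ 𝒱 := by
  rintro _ ⟨g, rfl⟩
  exact h𝒱.mem_of_tendsto (hT g) <| Filter.Eventually.of_forall fun s =>
    Submodule.sum_mem 𝒱 fun i _ => 𝒱.smul_mem _ (hV i (g i).2)

variable {MW : I → lp E p →L[𝕜] lp E p} {L : lp E p →L[𝕜] H} {v : I → 𝕜}
  {Q : lp E p →L[𝕜] lp (fun i => V i) q}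

theorem exists_apply_eq_of_mem_range (hv : ∀ i, v i ≠ 0)
    (hQ : ∀ f i, (Q f i : H) = (v i)⁻¹ • L (MW i f)) {i : I} {x : H}
    (hx : x ∈ LinearMap.range (L ∘L MW i : lp E p →ₗ[𝕜] H)) :
    ∃ f, (Q f i : H) = x := by
  obtain ⟨f, rfl⟩ := hx
  exact ⟨v i • f, by simp [hQ, smul_inv_smul₀ (hv i)]⟩

variable [DecidableEq I]

theorem synthesis_comp_eq (hp : p ≠ ∞) (hMW : IsCoordinateProjection MW) (hv : ∀ i, v i ≠ 0)
    {T : lp (fun i => V i) q →L[𝕜] H}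
    (hT : ∀ g : lp (fun i => V i) q, HasSum (fun i => v i • (g i : H)) (T g))
    (hQ : ∀ f i, (Q f i : H) = (v i)⁻¹ • L (MW i f)) :
    T ∘L Q = L := by
  ext f
  have hsum : HasSum (fun i => v i • (Q f i : H)) (L f) := by
    simpa only [hQ, smul_inv_smul₀ (hv _)] using L.hasSum (hMW.hasSum hp f)
  exact (hT (Q f)).unique hsum

theorem comp_coordinateProjection_eq (hMW : IsCoordinateProjection MW)
    {MV : I → lp (fun i => V i) q →L[𝕜] lp (fun i => V i) q} (hMV : IsCoordinateProjection MV)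
    (hQ : ∀ f i, (Q f i : H) = (v i)⁻¹ • L (MW i f)) (i : I) :
    Q ∘L MW i = MV i ∘L Q := by
  ext f j
  rw [ContinuousLinearMap.comp_apply, ContinuousLinearMap.comp_apply, hMV, hQ, hMW.apply_apply]
  split_ifs with hji
  · rw [hQ, hji]
  · simp

theorem range_comp_coordinateProjection_eq (hMW : IsCoordinateProjection MW)
    {MV : I → lp (fun i => V i) q →L[𝕜] lp (fun i => V i) q} (hMV : IsCoordinateProjection MV)
    (hv : ∀ i, v i ≠ 0) (hQ : ∀ f i, (Q f i : H) = (v i)⁻¹ • L (MW i f))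
    (hV : ∀ i, V i ≤ LinearMap.range (L ∘L MW i : lp E p →ₗ[𝕜] H)) (i : I) :
    LinearMap.range (Q ∘L MW i : lp E p →ₗ[𝕜] lp (fun i => V i) q) =
      LinearMap.range (MV i : lp (fun i => V i) q →ₗ[𝕜] lp (fun i => V i) q) := by
  rw [comp_coordinateProjection_eq hMW hMV hQ i]
  refine le_antisymm (LinearMap.range_comp_le_range _ _) ?_
  rintro _ ⟨g, rfl⟩
  obtain ⟨f, hf⟩ := exists_apply_eq_of_mem_range hv hQ (hV i (g i).2)
  exact ⟨f, hMV.apply_congr (Subtype.ext hf)⟩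

end Synthesis

theorem approx_dual_from_leftInverse_general
    {H : Type*} [NormedAddCommGroup H] [InnerProductSpace ℂ H] [CompleteSpace H]
    {I : Type*} [DecidableEq I]
    (𝒱 : Submodule ℂ H) [CompleteSpace 𝒱]
    (P : H →L[ℂ] H)
    (ε : ℝ)
    (W : I → Submodule ℂ H) [∀ i, CompleteSpace (W i)]
    (TW : lp (fun i => W i) 2 →L[ℂ] H)
    (MW : I → (lp (fun i => W i) 2 →L[ℂ] lp (fun i => W i) 2))
    (hMW : ∀ (k : I) (g : lp (fun i => W i) 2) (j : I), MW k g j = if j = k then g j else 0)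
    -- the approximate oblique left inverse L
    (L : lp (fun i => W i) 2 →L[ℂ] H)
    (hLapprox : ‖L ∘L ContinuousLinearMap.adjoint TW - P‖ ≤ ε)
    (hLran : LinearMap.range (L : lp (fun i => W i) 2 →ₗ[ℂ] H) = 𝒱)
    -- the subspaces V_i = L(M_i(K_W)), assumed closed
    (V : I → Submodule ℂ H)
    (hVi : ∀ i, V i = LinearMap.range ((L ∘L MW i : lp (fun i => W i) 2 →L[ℂ] H) : lp (fun i => W i) 2 →ₗ[ℂ] H))
    (v : I → ℝ) (hv : ∀ i, 0 < v i)
    (TV : lp (fun i => V i) 2 →L[ℂ] H)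
    (hTV : ∀ g : lp (fun i => V i) 2, HasSum (fun i => (v i : ℂ) • (g i : H)) (TV g))
    (MV : I → (lp (fun i => V i) 2 →L[ℂ] lp (fun i => V i) 2))
    (hMV : ∀ (k : I) (g : lp (fun i => V i) 2) (j : I), MV k g j = if j = k then g j else 0)
    -- the operator Q_{L,v}
    (Q : lp (fun i => W i) 2 →L[ℂ] lp (fun i => V i) 2)
    (hQ : ∀ (f : lp (fun i => W i) 2) (i : I), (Q f i : H) = ((v i : ℂ))⁻¹ • L (MW i f)) :
    TV ∘L Q = L ∧
    (∀ i, LinearMap.range ((Q ∘L MW i : lp (fun i => W i) 2 →L[ℂ] lp (fun i => V i) 2) : lp (fun i => W i) 2 →ₗ[ℂ] lp (fun i => V i) 2) = LinearMap.range (MV i : lp (fun i => V i) 2 →ₗ[ℂ] lp (fun i => V i) 2)) ∧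
    LinearMap.range (TV : lp (fun i => V i) 2 →ₗ[ℂ] H) = 𝒱 ∧
    ‖TV ∘L Q ∘L ContinuousLinearMap.adjoint TW - P‖ ≤ ε := by
  have hvC : ∀ i, (v i : ℂ) ≠ 0 := fun i => Complex.ofReal_ne_zero.mpr (hv i).ne'
  have hTVQ : TV ∘L Q = L := synthesis_comp_eq ENNReal.ofNat_ne_top hMW hvC hTV hQ
  have hV𝒱 : ∀ i, V i ≤ 𝒱 := fun i => hVi i ▸ hLran ▸ LinearMap.range_comp_le_range _ _
  refine ⟨hTVQ, range_comp_coordinateProjection_eq hMW hMV hvC hQ (fun i => (hVi i).le), ?_, ?_⟩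
  · refine le_antisymm (range_le_of_hasSum_smul hTV
      (completeSpace_coe_iff_isComplete.mp ‹_›).isClosed hV𝒱) ?_
    rw [← hLran, ← hTVQ]
    exact LinearMap.range_comp_le_range _ _
  · rwa [← ContinuousLinearMap.comp_assoc, hTVQ]

/-- If `L` is an `ε`-approximate oblique left inverse of `T_W*` with range `𝒱`,
`V_i = L(M_i(K_W))` are closed, `(V,v)` is a fusion Bessel sequence and
`Q_{L,v} f = (v i⁻¹ L (M_i f))_i` is bounded, then `T_V ∘ Q_{L,v} = L`, `Q_{L,v}` is
component preserving, `(V,v)` is a fusion frame for `𝒱`, and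
`‖T_V Q_{L,v} T_W* − P‖ ≤ ε`. -/
theorem approx_dual_from_leftInverse
    {H : Type*} [NormedAddCommGroup H] [InnerProductSpace ℂ H] [CompleteSpace H]
    {I : Type*} [Countable I] [DecidableEq I]
    (𝒱 𝒲 : Submodule ℂ H) [CompleteSpace 𝒱] [CompleteSpace 𝒲]
    (P : H →L[ℂ] H) (hPidem : P ∘L P = P)
    (hPran : LinearMap.range (P : H →ₗ[ℂ] H) = 𝒱) (hPker : LinearMap.ker (P : H →ₗ[ℂ] H) = 𝒲ᗮ)
    (ε : ℝ) (hε : 0 ≤ ε)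
    (W : I → Submodule ℂ H) [∀ i, CompleteSpace (W i)] (hW : ∀ i, W i ≤ 𝒲)
    (w : I → ℝ) (hw : ∀ i, 0 < w i)
    (TW : lp (fun i => W i) 2 →L[ℂ] H)
    (hTW : ∀ g : lp (fun i => W i) 2, HasSum (fun i => (w i : ℂ) • (g i : H)) (TW g))
    (hWfr : LinearMap.range (TW : lp (fun i => W i) 2 →ₗ[ℂ] H) = 𝒲)
    (MW : I → (lp (fun i => W i) 2 →L[ℂ] lp (fun i => W i) 2))
    (hMW : ∀ (k : I) (g : lp (fun i => W i) 2) (j : I), MW k g j = if j = k then g j else 0)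
    -- the approximate oblique left inverse L
    (L : lp (fun i => W i) 2 →L[ℂ] H)
    (hLapprox : ‖L ∘L ContinuousLinearMap.adjoint TW - P‖ ≤ ε)
    (hLran : LinearMap.range (L : lp (fun i => W i) 2 →ₗ[ℂ] H) = 𝒱)
    -- the subspaces V_i = L(M_i(K_W)), assumed closed
    (V : I → Submodule ℂ H) [∀ i, CompleteSpace (V i)]
    (hVi : ∀ i, V i = LinearMap.range ((L ∘L MW i : lp (fun i => W i) 2 →L[ℂ] H) : lp (fun i => W i) 2 →ₗ[ℂ] H))
    (v : I → ℝ) (hv : ∀ i, 0 < v i)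
    (TV : lp (fun i => V i) 2 →L[ℂ] H)
    (hTV : ∀ g : lp (fun i => V i) 2, HasSum (fun i => (v i : ℂ) • (g i : H)) (TV g))
    (MV : I → (lp (fun i => V i) 2 →L[ℂ] lp (fun i => V i) 2))
    (hMV : ∀ (k : I) (g : lp (fun i => V i) 2) (j : I), MV k g j = if j = k then g j else 0)
    -- the operator Q_{L,v}
    (Q : lp (fun i => W i) 2 →L[ℂ] lp (fun i => V i) 2)
    (hQ : ∀ (f : lp (fun i => W i) 2) (i : I), (Q f i : H) = ((v i : ℂ))⁻¹ • L (MW i f)) :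
    TV ∘L Q = L ∧
    (∀ i, LinearMap.range ((Q ∘L MW i : lp (fun i => W i) 2 →L[ℂ] lp (fun i => V i) 2) : lp (fun i => W i) 2 →ₗ[ℂ] lp (fun i => V i) 2) = LinearMap.range (MV i : lp (fun i => V i) 2 →ₗ[ℂ] lp (fun i => V i) 2)) ∧
    LinearMap.range (TV : lp (fun i => V i) 2 →ₗ[ℂ] H) = 𝒱 ∧
    ‖TV ∘L Q ∘L ContinuousLinearMap.adjoint TW - P‖ ≤ ε :=
  approx_dual_from_leftInverse_general 𝒱 P ε W TW MW hMW L hLapprox hLran V hVi v hv TV hTV MV hMV Q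
    hQ
end

section
/- Let H be a complex Hilbert space, P a bounded idempotent operator on H with range 𝒱, and S a bounded operator on H with S ∘ P = S, range of S contained in 𝒱, and ‖P − S‖ ≤ ε for some 0 ≤ ε < 1. Let A = (id_H − (P − S))⁻¹. If A ∘ S ∘ A = P, then A = id_H and S = P. -/
/-!
Write `B = 1 - (P - S)`. Since `S P = S` and, as `range S ⊆ range P`, also `P S = S`, one gets
`B P = S = P B`. Hence `P = A S A = (A B) P A = P A`, and then `S = P B = P A B = P`; so
`P - S = 0`, `B = 1` and its inverse `A` is `1`.
-/

section Ring

variable {R : Type*} [Ring R] {P S A : R}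

theorem IsIdempotentElem.one_sub_sub_mul_eq (hP : IsIdempotentElem P) (hSP : S * P = S) :
    (1 - (P - S)) * P = S := by
  rw [sub_mul, sub_mul, hP.eq, hSP, one_mul, sub_sub_cancel]

theorem IsIdempotentElem.mul_one_sub_sub_eq (hP : IsIdempotentElem P) (hPS : P * S = S) :
    P * (1 - (P - S)) = S := by
  rw [mul_sub, mul_sub, hP.eq, hPS, mul_one, sub_sub_cancel]

theorem IsIdempotentElem.eq_of_mul_mul_eq (hP : IsIdempotentElem P) (hSP : S * P = S)
    (hPS : P * S = S) (hA : A * (1 - (P - S)) = 1) (hASA : A * S * A = P) : S = P := by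
  have hPA : P * A = P :=
    calc P * A = A * ((1 - (P - S)) * P) * A := by rw [← mul_assoc A, hA, one_mul]
      _ = P := by rw [hP.one_sub_sub_mul_eq hSP, hASA]
  calc S = P * (1 - (P - S)) := (hP.mul_one_sub_sub_eq hPS).symm
    _ = P * (A * (1 - (P - S))) := by rw [← mul_assoc, hPA]
    _ = P := by rw [hA, mul_one]

end Ring

theorem ContinuousLinearMap.mul_eq_right_of_range_le {R M : Type*} [Semiring R]
    [AddCommMonoid M] [Module R M] [TopologicalSpace M] {P S : M →L[R] M}
    (hP : IsIdempotentElem P)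
    (h : LinearMap.range (S : M →ₗ[R] M) ≤ LinearMap.range (P : M →ₗ[R] M)) :
    P * S = S :=
  coe_injective <| (LinearMap.IsIdempotentElem.comp_eq_right_iff
    (isIdempotentElem_toLinearMap_iff.mpr hP) _).mpr h

theorem exact_dual_of_modified_pair_general
    {H : Type*} [NormedAddCommGroup H] [InnerProductSpace ℂ H]
    (𝒱 : Submodule ℂ H)
    (P S : H →L[ℂ] H) (hPidem : P * P = P) (hPran : LinearMap.range (P : H →ₗ[ℂ] H) = 𝒱)
    (hSP : S * P = S) (hSran : LinearMap.range (S : H →ₗ[ℂ] H) ≤ 𝒱)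
    (A : H →L[ℂ] H) (hA₁ : A * (1 - (P - S)) = 1)
    (hASA : A * S * A = P) :
    A = 1 ∧ S = P := by
  have hPS : P * S = S := P.mul_eq_right_of_range_le hPidem (hPran ▸ hSran)
  have hSeq : S = P := IsIdempotentElem.eq_of_mul_mul_eq hPidem hSP hPS hA₁ hASA
  refine ⟨?_, hSeq⟩
  simpa [hSeq] using hA₁

/-- If `P` is a bounded idempotent with range `𝒱`, `S ∘ P = S`, `range S ⊆ 𝒱`,
`‖P − S‖ ≤ ε < 1`, and `A = (id − (P − S))⁻¹` satisfies `A S A = P`, then `A = id` and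
`S = P`. -/
theorem exact_dual_of_modified_pair
    {H : Type*} [NormedAddCommGroup H] [InnerProductSpace ℂ H] [CompleteSpace H]
    (𝒱 : Submodule ℂ H) [CompleteSpace 𝒱]
    (P S : H →L[ℂ] H) (hPidem : P * P = P) (hPran : LinearMap.range (P : H →ₗ[ℂ] H) = 𝒱)
    (hSP : S * P = S) (hSran : LinearMap.range (S : H →ₗ[ℂ] H) ≤ 𝒱)
    (ε : ℝ) (hε0 : 0 ≤ ε) (hε1 : ε < 1) (hPS : ‖P - S‖ ≤ ε)
    (A : H →L[ℂ] H) (hA₁ : A * (1 - (P - S)) = 1) (hA₂ : (1 - (P - S)) * A = 1)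
    (hASA : A * S * A = P) :
    A = 1 ∧ S = P :=
  exact_dual_of_modified_pair_general 𝒱 P S hPidem hPran hSP hSran A hA₁ hASA
end

section
/- Let H be a complex Hilbert space, 𝒱 and 𝒲 closed subspaces with H = 𝒱 ⊕ 𝒲ᗮ, and P = π_{𝒱,𝒲ᗮ}. Let (W,w) be a fusion frame for 𝒲 with synthesis operator T_W, (V,v) a fusion frame for 𝒱 with synthesis operator T_V, Q : K_W → K_V a bounded operator, and ε ≥ 0. Then: (i) if for every f ∈ H the vector f_r := T_V Q T_W* f satisfies ‖T_W* f_r − T_W* f‖ ≤ (ε γ(T_W) / ‖P‖) ‖f‖, then ‖T_V Q T_W* − P‖ ≤ ε; and (ii) if ‖T_V Q T_W* − P‖ ≤ ε, then for every f ∈ H, ‖T_W* (T_V Q T_W* f) − T_W* f‖ ≤ ε ‖T_W‖ ‖f‖ (i.e., f_r = T_V Q T_W* f is an (ε‖T_W‖)-consistent reconstruction of f in 𝒱). -/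
open scoped ENNReal
set_option synthInstance.maxHeartbeats 1000000
set_option maxHeartbeats 1000000
noncomputable section

/-- Reduced minimum modulus of a bounded operator between inner product spaces:
`γ(A) = inf {‖A x‖ : ‖x‖ = 1, x ∈ (ker A)ᗮ}`. -/
def redMinMod {E F : Type*} [NormedAddCommGroup E] [InnerProductSpace ℂ E]
    [NormedAddCommGroup F] [InnerProductSpace ℂ F] (A : E →L[ℂ] F) : ℝ :=
  sInf ((fun x => ‖A x‖) '' {x : E | ‖x‖ = 1 ∧ x ∈ (LinearMap.ker (A : E →ₗ[ℂ] F))ᗮ})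

/-! The error operator `B = T_V Q T_W* - P` has range in `𝒱`, and `T_W* P = T_W*` because `P` and
`T_W*` both vanish on `𝒲ᗮ`; hence `T_W* f_r - T_W* f = T_W* (B f)`, and (ii) follows from
`‖T_W*‖ = ‖T_W‖`. For (i) the point is the lower bound `γ(T_W) ‖g‖ ≤ ‖P‖ ‖T_W* g‖` for `g ∈ 𝒱`:
if `m` is the orthogonal projection of `g` onto `𝒲`, then `g = P m` and `T_W* g = T_W* m`, while
`γ(T_W) ‖m‖ ≤ ‖T_W* m‖` because `m` lies in the range of `T_W`. By the open mapping theorem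
`γ(T_W) > 0` as soon as `P ≠ 0`, so it can be cancelled. -/

namespace ContinuousLinearMap

variable {E F : Type*} [NormedAddCommGroup E] [InnerProductSpace ℂ E]
  [NormedAddCommGroup F] [InnerProductSpace ℂ F]

theorem redMinMod_nonneg (A : E →L[ℂ] F) : 0 ≤ redMinMod A :=
  Real.sInf_nonneg <| by rintro _ ⟨x, -, rfl⟩; exact norm_nonneg _

theorem redMinMod_mul_norm_le (A : E →L[ℂ] F) {x : E} (hx : x ∈ A.kerᗮ) :
    redMinMod A * ‖x‖ ≤ ‖A x‖ := by
  rcases eq_or_ne x 0 with rfl | hx0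
  · simp
  have hxn : 0 < ‖x‖ := norm_pos_iff.mpr hx0
  have hle : redMinMod A ≤ ‖A ((‖x‖⁻¹ : ℂ) • x)‖ :=
    csInf_le ⟨0, by rintro _ ⟨y, -, rfl⟩; exact norm_nonneg _⟩
      ⟨_, ⟨norm_smul_inv_norm hx0, Submodule.smul_mem _ _ hx⟩, rfl⟩
  rw [map_smul, norm_smul, norm_inv, Complex.norm_real, Real.norm_of_nonneg hxn.le] at hle
  rwa [← le_div_iff₀ hxn, div_eq_inv_mul]

theorem le_redMinMod {A : E →L[ℂ] F} {c : ℝ} (hK : A.kerᗮ ≠ ⊥)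
    (hc : ∀ x ∈ A.kerᗮ, c * ‖x‖ ≤ ‖A x‖) : c ≤ redMinMod A := by
  obtain ⟨x, hx, hx0⟩ := Submodule.exists_mem_ne_zero_of_ne_bot hK
  refine le_csInf
    ⟨_, (‖x‖⁻¹ : ℂ) • x, ⟨norm_smul_inv_norm hx0, Submodule.smul_mem _ _ hx⟩, rfl⟩ ?_
  rintro _ ⟨y, ⟨hy1, hy⟩, rfl⟩
  simpa [hy1] using hc y hy

variable [CompleteSpace E]

theorem exists_mem_orthogonal_ker_apply_eq (A : E →L[ℂ] F) {y : F} (hy : y ∈ A.range) :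
    ∃ z ∈ A.kerᗮ, A z = y := by
  obtain ⟨x, rfl⟩ := hy
  have hproj : A (A.ker.starProjection x) = 0 := A.ker.starProjection_apply_mem x
  exact ⟨x - A.ker.starProjection x, Submodule.sub_starProjection_mem_orthogonal x,
    by rw [map_sub, hproj, sub_zero]; rfl⟩

theorem redMinMod_pos [CompleteSpace F] {A : E →L[ℂ] F} (hA : A ≠ 0)
    (hcl : IsClosed (A.range : Set F)) : 0 < redMinMod A := by
  set B := A ∘L A.kerᗮ.subtypeL
  have hinj : Function.Injective B := by
    intro x y hxy
    have hker : (x - y : E) ∈ A.ker := by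
      simpa [B, sub_eq_zero] using hxy
    exact Subtype.ext <| sub_eq_zero.mp <|
      Submodule.inner_right_of_mem_orthogonal hker (x - y).2 |> inner_self_eq_zero.mp
  have hrange : Set.range B = A.range := by
    ext y
    constructor
    · rintro ⟨x, rfl⟩; exact ⟨x, rfl⟩
    · intro hy
      obtain ⟨z, hz, rfl⟩ := A.exists_mem_orthogonal_ker_apply_eq hy
      exact ⟨⟨z, hz⟩, rfl⟩
  obtain ⟨c, hc0, hc⟩ := antilipschitzWith_iff_exists_mul_le_norm.mp
    (B.antilipschitz_of_injective_of_isClosed_range hinj (hrange ▸ hcl))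
  have hK : A.kerᗮ ≠ ⊥ := by
    rw [Ne, Submodule.orthogonal_eq_bot_iff, LinearMap.ker_eq_top]
    exact fun h => hA (coe_injective h)
  exact hc0.trans_le <| le_redMinMod hK fun x hx => hc ⟨x, hx⟩

theorem redMinMod_mul_norm_le_norm_adjoint [CompleteSpace F] (A : E →L[ℂ] F) {y : F}
    (hy : y ∈ A.range) : redMinMod A * ‖y‖ ≤ ‖adjoint A y‖ := by
  rcases eq_or_ne y 0 with rfl | hy0
  · simp
  obtain ⟨z, hz, rfl⟩ := A.exists_mem_orthogonal_ker_apply_eq hy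
  have hsq : ‖A z‖ ^ 2 ≤ ‖adjoint A (A z)‖ * ‖z‖ := by
    rw [norm_sq_eq_re_inner (𝕜 := ℂ), ← A.adjoint_inner_left]
    exact (RCLike.re_le_norm _).trans (norm_inner_le_norm _ _)
  have hAzn : 0 < ‖A z‖ := norm_pos_iff.mpr hy0
  refine le_of_mul_le_mul_right ?_ hAzn
  calc redMinMod A * ‖A z‖ * ‖A z‖ = redMinMod A * ‖A z‖ ^ 2 := by ring
    _ ≤ redMinMod A * (‖adjoint A (A z)‖ * ‖z‖) := by gcongr; exact A.redMinMod_nonneg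
    _ = ‖adjoint A (A z)‖ * (redMinMod A * ‖z‖) := by ring
    _ ≤ ‖adjoint A (A z)‖ * ‖A z‖ := by gcongr; exact A.redMinMod_mul_norm_le hz

end ContinuousLinearMap

section ObliqueProjection

open ContinuousLinearMap

variable {E H : Type*} [NormedAddCommGroup E] [InnerProductSpace ℂ E] [CompleteSpace E]
  [NormedAddCommGroup H] [InnerProductSpace ℂ H] [CompleteSpace H]
  {T : E →L[ℂ] H} {P : H →L[ℂ] H} {𝒲 : Submodule ℂ H}

theorem ker_adjoint_eq_orthogonal_of_range_eq (hT : T.range = 𝒲) : (adjoint T).ker = 𝒲ᗮ := by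
  rw [← hT, T.orthogonal_range]

theorem adjoint_apply_of_ker_eq_orthogonal (hP : IsIdempotentElem P) (hT : T.range = 𝒲)
    (hPker : P.ker = 𝒲ᗮ) (f : H) : adjoint T (P f) = adjoint T f := by
  have hmem : P f - f ∈ P.ker := by
    change P (P f - f) = 0
    rw [map_sub, ← mul_apply_eq_comp, hP.eq, sub_self]
  rw [hPker, ← ker_adjoint_eq_orthogonal_of_range_eq hT, LinearMap.mem_ker, coe_coe, map_sub,
    sub_eq_zero] at hmem
  exact hmem

theorem redMinMod_mul_norm_le_opNorm_mul_norm_adjoint [𝒲.HasOrthogonalProjection]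
    (hP : IsIdempotentElem P) (hT : T.range = 𝒲) (hPker : P.ker = 𝒲ᗮ) {g : H}
    (hg : g ∈ P.range) : redMinMod T * ‖g‖ ≤ ‖P‖ * ‖adjoint T g‖ := by
  set m := 𝒲.starProjection g
  have hgm : g - m ∈ 𝒲ᗮ := Submodule.sub_starProjection_mem_orthogonal g
  have hPm : P m = g := by
    have hker : g - m ∈ P.ker := hPker ▸ hgm
    rw [LinearMap.mem_ker, coe_coe, map_sub, sub_eq_zero] at hker
    rw [← hker]
    exact (LinearMap.IsIdempotentElem.mem_range_iff (IsIdempotentElem.toLinearMap hP)).mp hg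
  have hadj : adjoint T g = adjoint T m := by
    rw [← ker_adjoint_eq_orthogonal_of_range_eq hT, LinearMap.mem_ker, coe_coe, map_sub,
      sub_eq_zero] at hgm
    exact hgm
  have hm : m ∈ T.range := hT ▸ 𝒲.starProjection_apply_mem g
  calc redMinMod T * ‖g‖ = redMinMod T * ‖P m‖ := by rw [hPm]
    _ ≤ redMinMod T * (‖P‖ * ‖m‖) := by gcongr; exacts [T.redMinMod_nonneg, P.le_opNorm m]
    _ = ‖P‖ * (redMinMod T * ‖m‖) := by ring
    _ ≤ ‖P‖ * ‖adjoint T g‖ := by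
      rw [hadj]; gcongr; exact T.redMinMod_mul_norm_le_norm_adjoint hm

theorem opNorm_le_of_norm_adjoint_apply_le [CompleteSpace 𝒲] (hP : IsIdempotentElem P)
    (hT : T.range = 𝒲) (hPker : P.ker = 𝒲ᗮ) {ε : ℝ} (hε : 0 ≤ ε) (B : H →L[ℂ] H)
    (hB : B.range ≤ P.range) (h : ∀ f, ‖adjoint T (B f)‖ ≤ ε * redMinMod T / ‖P‖ * ‖f‖) :
    ‖B‖ ≤ ε := by
  refine B.opNorm_le_bound hε fun f => ?_
  rcases eq_or_ne P 0 with rfl | hP0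
  · have hBf : B f ∈ (0 : H →L[ℂ] H).range := hB ⟨f, rfl⟩
    rw [toLinearMap_zero, LinearMap.range_zero, Submodule.mem_bot] at hBf
    rw [hBf, norm_zero]
    positivity
  have hT0 : T ≠ 0 := by
    rintro rfl
    rw [toLinearMap_zero, LinearMap.range_zero] at hT
    rw [← hT, Submodule.bot_orthogonal_eq_top, LinearMap.ker_eq_top] at hPker
    exact hP0 (coe_injective hPker)
  have hγ : 0 < redMinMod T :=
    redMinMod_pos hT0 (hT ▸ (completeSpace_coe_iff_isComplete.mp ‹_›).isClosed)
  have hPn : 0 < ‖P‖ := norm_pos_iff.mpr hP0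
  refine le_of_mul_le_mul_left ?_ hγ
  calc redMinMod T * ‖B f‖ ≤ ‖P‖ * ‖adjoint T (B f)‖ :=
        redMinMod_mul_norm_le_opNorm_mul_norm_adjoint hP hT hPker (hB ⟨f, rfl⟩)
    _ ≤ ‖P‖ * (ε * redMinMod T / ‖P‖ * ‖f‖) := by gcongr; exact h f
    _ = redMinMod T * (ε * ‖f‖) := by field_simp

end ObliqueProjection

theorem consistent_reconstruction_iff_approx_dual_general
    {H : Type*} [NormedAddCommGroup H] [InnerProductSpace ℂ H] [CompleteSpace H]
    {I : Type*}
    (𝒱 𝒲 : Submodule ℂ H) [CompleteSpace 𝒲]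
    (P : H →L[ℂ] H) (hPidem : P ∘L P = P)
    (hPran : LinearMap.range (P : H →ₗ[ℂ] H) = 𝒱) (hPker : LinearMap.ker (P : H →ₗ[ℂ] H) = 𝒲ᗮ)
    (W : I → Submodule ℂ H) [∀ i, CompleteSpace (W i)]
    (TW : lp (fun i => W i) 2 →L[ℂ] H)
    (hWfr : LinearMap.range (TW : lp (fun i => W i) 2 →ₗ[ℂ] H) = 𝒲)
    (V : I → Submodule ℂ H)
    (TV : lp (fun i => V i) 2 →L[ℂ] H)
    (hVfr : LinearMap.range (TV : lp (fun i => V i) 2 →ₗ[ℂ] H) = 𝒱)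
    (Q : lp (fun i => W i) 2 →L[ℂ] lp (fun i => V i) 2)
    (ε : ℝ) (hε : 0 ≤ ε) :
    ((∀ f : H,
        ‖ContinuousLinearMap.adjoint TW (TV (Q (ContinuousLinearMap.adjoint TW f))) -
            ContinuousLinearMap.adjoint TW f‖ ≤ (ε * redMinMod TW / ‖P‖) * ‖f‖) →
      ‖TV ∘L Q ∘L ContinuousLinearMap.adjoint TW - P‖ ≤ ε) ∧
    (‖TV ∘L Q ∘L ContinuousLinearMap.adjoint TW - P‖ ≤ ε →
      ∀ f : H,
        ‖ContinuousLinearMap.adjoint TW (TV (Q (ContinuousLinearMap.adjoint TW f))) -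
            ContinuousLinearMap.adjoint TW f‖ ≤ ε * ‖TW‖ * ‖f‖) := by
  have hP : IsIdempotentElem P := hPidem
  set B := TV ∘L Q ∘L ContinuousLinearMap.adjoint TW - P
  have hdiff (f : H) : ContinuousLinearMap.adjoint TW (TV (Q (ContinuousLinearMap.adjoint TW f))) -
      ContinuousLinearMap.adjoint TW f = ContinuousLinearMap.adjoint TW (B f) := by
    rw [sub_apply, map_sub, adjoint_apply_of_ker_eq_orthogonal hP hWfr hPker]
    rfl
  refine ⟨fun hcons => ?_, fun hB f => ?_⟩
  · refine opNorm_le_of_norm_adjoint_apply_le hP hWfr hPker hε B ?_ fun f => hdiff f ▸ hcons f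
    rintro _ ⟨f, rfl⟩
    rw [hPran]
    exact sub_mem (hVfr ▸ LinearMap.mem_range_self _ _) (hPran ▸ LinearMap.mem_range_self _ _)
  · rw [hdiff]
    calc ‖ContinuousLinearMap.adjoint TW (B f)‖ ≤ ‖TW‖ * ‖B f‖ :=
          (ContinuousLinearMap.adjoint TW).le_of_opNorm_le
            (ContinuousLinearMap.adjoint.norm_map TW).le _
      _ ≤ ‖TW‖ * (ε * ‖f‖) := by gcongr; exact B.le_of_opNorm_le hB f
      _ = ε * ‖TW‖ * ‖f‖ := by ring

/-- `ε`-consistent reconstruction versus `ε`-approximate oblique duality: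
(i) if `f_r = T_V Q T_W* f` is an `(ε γ(T_W)/‖P‖)`-consistent reconstruction of every `f`,
then `‖T_V Q T_W* − P‖ ≤ ε`; (ii) if `‖T_V Q T_W* − P‖ ≤ ε`, then `f_r = T_V Q T_W* f` is an
`(ε ‖T_W‖)`-consistent reconstruction of every `f` in `𝒱`. -/
theorem consistent_reconstruction_iff_approx_dual
    {H : Type*} [NormedAddCommGroup H] [InnerProductSpace ℂ H] [CompleteSpace H]
    {I : Type*} [Countable I]
    (𝒱 𝒲 : Submodule ℂ H) [CompleteSpace 𝒱] [CompleteSpace 𝒲]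
    (P : H →L[ℂ] H) (hPidem : P ∘L P = P)
    (hPran : LinearMap.range (P : H →ₗ[ℂ] H) = 𝒱) (hPker : LinearMap.ker (P : H →ₗ[ℂ] H) = 𝒲ᗮ)
    (W : I → Submodule ℂ H) [∀ i, CompleteSpace (W i)] (hW : ∀ i, W i ≤ 𝒲)
    (w : I → ℝ) (hw : ∀ i, 0 < w i)
    (TW : lp (fun i => W i) 2 →L[ℂ] H)
    (hTW : ∀ g : lp (fun i => W i) 2, HasSum (fun i => (w i : ℂ) • (g i : H)) (TW g))
    (hWfr : LinearMap.range (TW : lp (fun i => W i) 2 →ₗ[ℂ] H) = 𝒲)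
    (V : I → Submodule ℂ H) [∀ i, CompleteSpace (V i)] (hV : ∀ i, V i ≤ 𝒱)
    (v : I → ℝ) (hv : ∀ i, 0 < v i)
    (TV : lp (fun i => V i) 2 →L[ℂ] H)
    (hTV : ∀ g : lp (fun i => V i) 2, HasSum (fun i => (v i : ℂ) • (g i : H)) (TV g))
    (hVfr : LinearMap.range (TV : lp (fun i => V i) 2 →ₗ[ℂ] H) = 𝒱)
    (Q : lp (fun i => W i) 2 →L[ℂ] lp (fun i => V i) 2)
    (ε : ℝ) (hε : 0 ≤ ε) :
    ((∀ f : H,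
        ‖ContinuousLinearMap.adjoint TW (TV (Q (ContinuousLinearMap.adjoint TW f))) -
            ContinuousLinearMap.adjoint TW f‖ ≤ (ε * redMinMod TW / ‖P‖) * ‖f‖) →
      ‖TV ∘L Q ∘L ContinuousLinearMap.adjoint TW - P‖ ≤ ε) ∧
    (‖TV ∘L Q ∘L ContinuousLinearMap.adjoint TW - P‖ ≤ ε →
      ∀ f : H,
        ‖ContinuousLinearMap.adjoint TW (TV (Q (ContinuousLinearMap.adjoint TW f))) -
            ContinuousLinearMap.adjoint TW f‖ ≤ ε * ‖TW‖ * ‖f‖) :=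
  consistent_reconstruction_iff_approx_dual_general 𝒱 𝒲 P hPidem hPran hPker W TW hWfr V TV hVfr Q ε
    hε
end
end
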